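/- arXiv:2605.18320 — 4 statements merged into one kernel-verified Lean document; each statement's English description precedes it below -/
import Mathlib

section
/- Let S be a type (the state space), δ_τ > 0, δ_sub > 0, V_max ∈ ℝ, and V_star : S → ℝ with V_max ≥ V_star(s) for all s ∈ S. Let p ∈ [0,1] satisfy p ≤ (δ_τ + δ_sub) / (V_max − V_star(s) + δ_τ + δ_sub) for all s ∈ S. Suppose (V_k)_{k∈ℕ} is a sequence of functions S → ℝ such that V_0(s) ≤ V_star(s) for all s, and for every k: if V_k(s) ≤ V_star(s) for all s, then V_{k+1}(s) ≤ (1 − p)·(V_star(s) − (δ_τ + δ_sub)) + p·V_max for all s. Then V_k(s) ≤ V_star(s) for all k ∈ ℕ and all s ∈ S. -/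
theorem one_sub_mul_sub_add_mul_le {K : Type*} [Field K] [LinearOrder K]
    [IsStrictOrderedRing K] {a b d p : K} (hpos : 0 < b - a + d)
    (hp : p ≤ d / (b - a + d)) : (1 - p) * (a - d) + p * b ≤ a :=
  calc (1 - p) * (a - d) + p * b = a - d + p * (b - a + d) := by ring
    _ ≤ a - d + d := by gcongr; exact (le_div_iff₀ hpos).mp hp
    _ = a := by ring

theorem isep_safety_statewise_general
    (S : Type*)
    (δτ δsub Vmax p : ℝ)
    (Vstar : S → ℝ)
    (hδτ : 0 < δτ) (hδsub : 0 < δsub)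
    (hV : ∀ s, Vstar s ≤ Vmax)
    (hpbound : ∀ s, p ≤ (δτ + δsub) / (Vmax - Vstar s + δτ + δsub))
    (V : ℕ → S → ℝ)
    (h0 : ∀ s, V 0 s ≤ Vstar s)
    (hstep : ∀ k, (∀ s, V k s ≤ Vstar s) →
      ∀ s, V (k + 1) s ≤ (1 - p) * (Vstar s - (δτ + δsub)) + p * Vmax) :
    ∀ k s, V k s ≤ Vstar s := by
  intro k
  induction k with
  | zero => exact h0
  | succ k ih =>
    intro s
    have hpos : 0 < Vmax - Vstar s + (δτ + δsub) := by linarith [hV s]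
    refine (hstep k ih s).trans (one_sub_mul_sub_add_mul_le hpos ?_)
    simpa only [add_assoc] using hpbound s

theorem isep_safety_statewise
    (S : Type*)
    (δτ δsub Vmax p : ℝ)
    (Vstar : S → ℝ)
    (hδτ : 0 < δτ) (hδsub : 0 < δsub)
    (hV : ∀ s, Vstar s ≤ Vmax)
    (hp0 : 0 ≤ p) (hp1 : p ≤ 1)
    (hpbound : ∀ s, p ≤ (δτ + δsub) / (Vmax - Vstar s + δτ + δsub))
    (V : ℕ → S → ℝ)
    (h0 : ∀ s, V 0 s ≤ Vstar s)
    (hstep : ∀ k, (∀ s, V k s ≤ Vstar s) →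
      ∀ s, V (k + 1) s ≤ (1 - p) * (Vstar s - (δτ + δsub)) + p * Vmax) :
    ∀ k s, V k s ≤ Vstar s :=
  isep_safety_statewise_general S δτ δsub Vmax p Vstar hδτ hδsub hV hpbound V h0 hstep
end

section
/- Let (Ω, P) be a probability space, X : Ω → ℝ an integrable random variable, and τ ∈ (0,1). Then there exists a unique real number t such that τ·∫ max(X − t, 0) dP = (1 − τ)·∫ max(t − X, 0) dP. -/
/-! The balance function `t ↦ τ E[(X - t)⁺] - (1 - τ) E[(t - X)⁺]` is the expectation of a
pointwise score which, for `τ ∈ (0, 1)`, is `1`-Lipschitz in `t` and decreases with slope at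
least `min τ (1 - τ)`. Both properties survive integration, so the balance function is continuous
and runs from `+∞` to `-∞` strictly decreasingly: it has exactly one zero. -/

open MeasureTheory Filter

def expectileScore (τ x t : ℝ) : ℝ := τ * max (x - t) 0 - (1 - τ) * max (t - x) 0

lemma min_mul_sub_le_expectileScore_sub (τ x : ℝ) {t s : ℝ} (hts : t ≤ s) :
    min τ (1 - τ) * (s - t) ≤ expectileScore τ x t - expectileScore τ x s := by
  have hτ := min_le_left τ (1 - τ)
  have h1τ := min_le_right τ (1 - τ)
  unfold expectileScore
  rcases le_total x t with hxt | hxt <;> rcases le_total x s with hxs | hxs <;>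
    simp only [max_eq_left, max_eq_right, sub_nonneg, sub_nonpos, *] <;> nlinarith

lemma expectileScore_sub_le {τ : ℝ} (hτ₀ : 0 ≤ τ) (hτ₁ : τ ≤ 1) (x : ℝ) {t s : ℝ} (hts : t ≤ s) :
    expectileScore τ x t - expectileScore τ x s ≤ s - t := by
  unfold expectileScore
  rcases le_total x t with hxt | hxt <;> rcases le_total x s with hxs | hxs <;>
    simp only [max_eq_left, max_eq_right, sub_nonneg, sub_nonpos, *] <;> nlinarith

lemma lipschitzWith_expectileScore {τ : ℝ} (hτ₀ : 0 ≤ τ) (hτ₁ : τ ≤ 1) (x : ℝ) :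
    LipschitzWith 1 (expectileScore τ x) := by
  refine LipschitzWith.of_le_add fun t s => ?_
  rw [Real.dist_eq]
  rcases le_total t s with hts | hst
  · linarith [expectileScore_sub_le hτ₀ hτ₁ x hts, neg_abs_le (t - s)]
  · have := min_mul_sub_le_expectileScore_sub τ x hst
    have : 0 ≤ min τ (1 - τ) * (t - s) := mul_nonneg (le_min hτ₀ (by linarith)) (by linarith)
    linarith [abs_nonneg (t - s)]

theorem LipschitzWith.integral {Ω α E : Type*} [MeasurableSpace Ω] {μ : Measure Ω}
    [IsProbabilityMeasure μ] [PseudoMetricSpace α] [NormedAddCommGroup E] [NormedSpace ℝ E]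
    {F : α → Ω → E} {K : NNReal} (hF : ∀ a, Integrable (F a) μ)
    (hK : ∀ ω, LipschitzWith K (F · ω)) : LipschitzWith K fun a => ∫ ω, F a ω ∂μ := by
  refine LipschitzWith.of_dist_le_mul fun a b => ?_
  rw [dist_eq_norm, ← integral_sub (hF a) (hF b)]
  simpa using norm_integral_le_of_norm_le_const (μ := μ)
    (ae_of_all _ fun ω => (dist_eq_norm (F a ω) (F b ω)).symm.trans_le ((hK ω).dist_le_mul a b))

section
variable {Ω : Type*} [MeasurableSpace Ω] {P : Measure Ω} {X : Ω → ℝ}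

lemma MeasureTheory.Integrable.expectileScore [IsFiniteMeasure P] (hX : Integrable X P) (τ t : ℝ) :
    Integrable (fun ω => expectileScore τ (X ω) t) P :=
  ((hX.sub (integrable_const t)).pos_part.const_mul τ).sub
    (((integrable_const t).sub hX).pos_part.const_mul (1 - τ))

lemma integral_expectileScore [IsFiniteMeasure P] (hX : Integrable X P) (τ t : ℝ) :
    ∫ ω, expectileScore τ (X ω) t ∂P =
      τ * ∫ ω, max (X ω - t) 0 ∂P - (1 - τ) * ∫ ω, max (t - X ω) 0 ∂P := by
  rw [← integral_const_mul, ← integral_const_mul, ← integral_sub]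
  · rfl
  · exact (hX.sub (integrable_const t)).pos_part.const_mul τ
  · exact ((integrable_const t).sub hX).pos_part.const_mul (1 - τ)

lemma min_mul_sub_le_integral_expectileScore_sub [IsProbabilityMeasure P] (hX : Integrable X P)
    (τ : ℝ) {t s : ℝ} (hts : t ≤ s) :
    min τ (1 - τ) * (s - t) ≤
      ∫ ω, expectileScore τ (X ω) t ∂P - ∫ ω, expectileScore τ (X ω) s ∂P := by
  rw [← integral_sub (hX.expectileScore τ t) (hX.expectileScore τ s)]
  simpa using integral_mono (integrable_const _)
    ((hX.expectileScore τ t).sub (hX.expectileScore τ s))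
    fun ω => min_mul_sub_le_expectileScore_sub τ (X ω) hts

end

theorem exists_unique_eq_zero_of_mul_sub_le_sub {f : ℝ → ℝ} (hf : Continuous f) {c : ℝ}
    (hc : 0 < c) (h : ∀ t s, t ≤ s → c * (s - t) ≤ f t - f s) : ∃! t, f t = 0 := by
  have hanti : StrictAnti f := fun t s hts => by linarith [h t s hts.le, mul_pos hc (sub_pos.2 hts)]
  have hbot : Tendsto f atBot atTop :=
    tendsto_atTop_mono' _
      (eventually_le_atBot 0 |>.mono fun t ht => show f 0 + -c * t ≤ f t by linarith [h t 0 ht])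
      (tendsto_atTop_add_const_left _ _ (tendsto_id.const_mul_atBot_of_neg (neg_neg_of_pos hc)))
  have htop : Tendsto f atTop atBot :=
    tendsto_atBot_mono' _
      (eventually_ge_atTop 0 |>.mono fun t ht => show f t ≤ f 0 + -c * t by linarith [h 0 t ht])
      (tendsto_atBot_add_const_left _ _ (tendsto_id.const_mul_atTop_of_neg (neg_neg_of_pos hc)))
  obtain ⟨t, ht⟩ := hf.surjective' hbot htop 0
  exact ⟨t, ht, fun s hs => hanti.injective (hs.trans ht.symm)⟩

theorem expectile_exists_unique
    {Ω : Type*} [MeasurableSpace Ω] (P : Measure Ω) [IsProbabilityMeasure P]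
    (X : Ω → ℝ) (hX : Integrable X P)
    (τ : ℝ) (hτ : τ ∈ Set.Ioo (0 : ℝ) 1) :
    ∃! t : ℝ,
      τ * ∫ ω, max (X ω - t) 0 ∂P = (1 - τ) * ∫ ω, max (t - X ω) 0 ∂P := by
  obtain ⟨hτ₀, hτ₁⟩ := hτ
  simp_rw [← sub_eq_zero (a := τ * _), ← integral_expectileScore hX]
  exact exists_unique_eq_zero_of_mul_sub_le_sub
    (LipschitzWith.integral (hX.expectileScore τ)
      fun ω => lipschitzWith_expectileScore hτ₀.le hτ₁.le (X ω)).continuous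
    (lt_min hτ₀ (sub_pos.2 hτ₁)) fun t s => min_mul_sub_le_integral_expectileScore_sub hX τ
end

section
/- Let (Ω, P) be a probability space, X : Ω → ℝ a random variable with ∫ X² dP < ∞, and τ ∈ (0,1). Define the asymmetric squared loss L(t) = ∫ |τ − 1{X(ω) < t}|·(X(ω) − t)² dP(ω). Then a real number t minimizes L (i.e., L(t) ≤ L(s) for all s ∈ ℝ) if and only if τ·∫ max(X − t, 0) dP = (1 − τ)·∫ max(t − X, 0) dP. -/
/-!
With `u⁺ = max u 0` and `u⁻ = max (-u) 0`, the loss is `ρ(u) = τ (u⁺)² + (1 - τ) (u⁻)²`.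
It is differentiable with `ρ'(u) = 2 (τ u⁺ - (1 - τ) u⁻)`, and `ρ(v)` lies between the tangent
value `ρ(u) + ρ'(u) (v - u)` and that value plus `(v - u)²`. Integrating at `u = X - t`,
`v = X - s` sandwiches `L(s) - L(t)` between `c (s - t)` and `c (s - t) + (s - t)²` with
`c = -E[ρ'(X - t)]`, so `t` minimizes `L` exactly when `E[ρ'(X - t)] = 0`, which is the
expectile equation.
-/

open MeasureTheory

theorem forall_le_iff_eq_zero_of_tangent_sandwich {f : ℝ → ℝ} {t c K : ℝ} (hK : 0 ≤ K)
    (hlow : ∀ s, f t + c * (s - t) ≤ f s)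
    (hupp : ∀ s, f s ≤ f t + c * (s - t) + K * (s - t) ^ 2) :
    (∀ s, f t ≤ f s) ↔ c = 0 := by
  constructor
  · intro hmin
    have hK1 : K + 1 ≠ 0 := by positivity
    -- at `s = t - c / (K + 1)` the upper bound lies `(c / (K + 1))²` below `f t`
    have hdrop : c * (t - c / (K + 1) - t) + K * (t - c / (K + 1) - t) ^ 2
        = -(c / (K + 1)) ^ 2 := by
      field_simp
      ring
    have hsq : (c / (K + 1)) ^ 2 ≤ 0 := by
      linarith [hmin (t - c / (K + 1)), hupp (t - c / (K + 1))]
    have hdiv : c / (K + 1) = 0 :=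
      pow_eq_zero_iff two_ne_zero |>.mp (le_antisymm hsq (sq_nonneg _))
    exact (div_eq_zero_iff.mp hdiv).resolve_right hK1
  · rintro rfl s
    simpa using hlow s

theorem sq_max_zero_tangent_le (a b : ℝ) :
    max a 0 ^ 2 + 2 * max a 0 * (b - a) ≤ max b 0 ^ 2 := by
  rcases le_total a 0 with ha | ha <;> rcases le_total b 0 with hb | hb <;>
    simp only [max_eq_left, max_eq_right, ha, hb] <;> nlinarith [sq_nonneg (b - a)]

theorem sq_max_zero_le_tangent_add_sq (a b : ℝ) :
    max b 0 ^ 2 ≤ max a 0 ^ 2 + 2 * max a 0 * (b - a) + (b - a) ^ 2 := by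
  rcases le_total a 0 with ha | ha <;> rcases le_total b 0 with hb | hb <;>
    simp only [max_eq_left, max_eq_right, ha, hb] <;> nlinarith [sq_nonneg (b - a)]

noncomputable def expectileLoss (τ u : ℝ) : ℝ := |τ - if u < 0 then 1 else 0| * u ^ 2

def expectileLossDeriv (τ u : ℝ) : ℝ := 2 * (τ * max u 0 - (1 - τ) * max (-u) 0)

section Pointwise

variable {τ : ℝ}

theorem expectileLoss_eq (hτ0 : 0 ≤ τ) (hτ1 : τ ≤ 1) (u : ℝ) :
    expectileLoss τ u = τ * max u 0 ^ 2 + (1 - τ) * max (-u) 0 ^ 2 := by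
  rcases lt_or_ge u 0 with hu | hu
  · rw [expectileLoss, if_pos hu, abs_of_nonpos (by linarith), max_eq_right hu.le,
      max_eq_left (by linarith)]
    ring
  · rw [expectileLoss, if_neg (not_lt.2 hu), sub_zero, abs_of_nonneg hτ0, max_eq_left hu,
      max_eq_right (by linarith)]
    ring

theorem expectileLoss_tangent_le (hτ0 : 0 ≤ τ) (hτ1 : τ ≤ 1) (u v : ℝ) :
    expectileLoss τ u + expectileLossDeriv τ u * (v - u) ≤ expectileLoss τ v := by
  have hpos := mul_le_mul_of_nonneg_left (sq_max_zero_tangent_le u v) hτ0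
  have hneg := mul_le_mul_of_nonneg_left (sq_max_zero_tangent_le (-u) (-v))
    (sub_nonneg.2 hτ1)
  rw [expectileLoss_eq hτ0 hτ1, expectileLoss_eq hτ0 hτ1, expectileLossDeriv]
  linarith

theorem expectileLoss_le_tangent_add_sq (hτ0 : 0 ≤ τ) (hτ1 : τ ≤ 1) (u v : ℝ) :
    expectileLoss τ v ≤
      expectileLoss τ u + expectileLossDeriv τ u * (v - u) + (v - u) ^ 2 := by
  have hpos := mul_le_mul_of_nonneg_left (sq_max_zero_le_tangent_add_sq u v) hτ0
  have hneg := mul_le_mul_of_nonneg_left (sq_max_zero_le_tangent_add_sq (-u) (-v))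
    (sub_nonneg.2 hτ1)
  rw [expectileLoss_eq hτ0 hτ1, expectileLoss_eq hτ0 hτ1, expectileLossDeriv]
  linarith

theorem expectileLoss_le_sq (hτ0 : 0 ≤ τ) (hτ1 : τ ≤ 1) (u : ℝ) :
    expectileLoss τ u ≤ u ^ 2 := by
  refine mul_le_of_le_one_left (sq_nonneg u) ?_
  split_ifs <;> rw [abs_le] <;> constructor <;> linarith

theorem continuous_expectileLoss (hτ0 : 0 ≤ τ) (hτ1 : τ ≤ 1) :
    Continuous (expectileLoss τ) := by
  simp_rw [funext (expectileLoss_eq hτ0 hτ1)]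
  fun_prop

end Pointwise

section Integral

variable {Ω : Type*} [MeasurableSpace Ω] {P : Measure Ω} [IsFiniteMeasure P]
  {X : Ω → ℝ}

theorem forall_integral_le_iff_integral_eq_zero {ρ ρ' : ℝ → ℝ} {t : ℝ}
    (hρ : ∀ s, Integrable (fun ω => ρ (X ω - s)) P)
    (hρ' : Integrable (fun ω => ρ' (X ω - t)) P)
    (hlow : ∀ u v, ρ u + ρ' u * (v - u) ≤ ρ v)
    (hupp : ∀ u v, ρ v ≤ ρ u + ρ' u * (v - u) + (v - u) ^ 2) :
    (∀ s, ∫ ω, ρ (X ω - t) ∂P ≤ ∫ ω, ρ (X ω - s) ∂P) ↔ ∫ ω, ρ' (X ω - t) ∂P = 0 := by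
  have htangent : ∀ s, Integrable (fun ω => ρ (X ω - t) + ρ' (X ω - t) * (t - s)) P :=
    fun s => (hρ t).add (hρ'.mul_const _)
  have hintegral_tangent : ∀ s, ∫ ω, ρ (X ω - t) + ρ' (X ω - t) * (t - s) ∂P
      = ∫ ω, ρ (X ω - t) ∂P + -(∫ ω, ρ' (X ω - t) ∂P) * (s - t) := fun s => by
    rw [integral_add (hρ t) (hρ'.mul_const _), integral_mul_const]
    ring
  rw [← neg_eq_zero]
  refine forall_le_iff_eq_zero_of_tangent_sandwich (f := fun s => ∫ ω, ρ (X ω - s) ∂P)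
    (K := P.real Set.univ) measureReal_nonneg (fun s => ?_) (fun s => ?_)
  · rw [← hintegral_tangent]
    refine integral_mono (htangent s) (hρ s) fun ω => ?_
    simpa only [sub_sub_sub_cancel_left] using hlow (X ω - t) (X ω - s)
  · have hint : ∫ ω, ρ (X ω - t) + ρ' (X ω - t) * (t - s) + (t - s) ^ 2 ∂P
        = ∫ ω, ρ (X ω - t) ∂P + -(∫ ω, ρ' (X ω - t) ∂P) * (s - t)
          + P.real Set.univ * (s - t) ^ 2 := by
      rw [integral_add (htangent s) (integrable_const _), hintegral_tangent, integral_const,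
        smul_eq_mul]
      ring
    rw [← hint]
    refine integral_mono (hρ s) ((htangent s).add (integrable_const _)) fun ω => ?_
    simpa only [sub_sub_sub_cancel_left] using hupp (X ω - t) (X ω - s)

theorem integrable_expectileLoss {τ : ℝ} (hτ0 : 0 ≤ τ) (hτ1 : τ ≤ 1) (hX : MemLp X 2 P)
    (s : ℝ) : Integrable (fun ω => expectileLoss τ (X ω - s)) P := by
  have hXs : MemLp (fun ω => X ω - s) 2 P := hX.sub (memLp_const s)
  refine hXs.integrable_sq.mono'
    ((continuous_expectileLoss hτ0 hτ1).comp_aestronglyMeasurable hXs.aestronglyMeasurable)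
    (ae_of_all _ fun ω => ?_)
  rw [Real.norm_eq_abs, abs_of_nonneg (by unfold expectileLoss; positivity)]
  exact expectileLoss_le_sq hτ0 hτ1 _

theorem integrable_expectileLossDeriv (hX : Integrable X P) (τ t : ℝ) :
    Integrable (fun ω => expectileLossDeriv τ (X ω - t)) P :=
  (((hX.sub (integrable_const t)).pos_part.const_mul τ).sub
    ((hX.sub (integrable_const t)).neg.pos_part.const_mul (1 - τ))).const_mul 2

theorem integral_expectileLossDeriv (hX : Integrable X P) (τ t : ℝ) :
    ∫ ω, expectileLossDeriv τ (X ω - t) ∂P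
      = 2 * (τ * ∫ ω, max (X ω - t) 0 ∂P - (1 - τ) * ∫ ω, max (t - X ω) 0 ∂P) := by
  simp only [expectileLossDeriv, neg_sub]
  rw [integral_const_mul, integral_sub, integral_const_mul, integral_const_mul]
  · exact (hX.sub (integrable_const t)).pos_part.const_mul τ
  · exact ((integrable_const t).sub hX).pos_part.const_mul (1 - τ)

end Integral

theorem expectile_loss_minimizer_iff
    {Ω : Type*} [MeasurableSpace Ω] (P : Measure Ω) [IsProbabilityMeasure P]
    (X : Ω → ℝ) (hX : Measurable X)
    (hX2 : Integrable (fun ω => (X ω) ^ 2) P)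
    (τ : ℝ) (hτ : τ ∈ Set.Ioo (0 : ℝ) 1)
    (t : ℝ) :
    (∀ s : ℝ,
        ∫ ω, |τ - (if X ω < t then (1 : ℝ) else 0)| * (X ω - t) ^ 2 ∂P
          ≤ ∫ ω, |τ - (if X ω < s then (1 : ℝ) else 0)| * (X ω - s) ^ 2 ∂P) ↔
      τ * ∫ ω, max (X ω - t) 0 ∂P = (1 - τ) * ∫ ω, max (t - X ω) 0 ∂P := by
  have hτ0 : 0 ≤ τ := hτ.1.le
  have hτ1 : τ ≤ 1 := hτ.2.le
  have hXL2 : MemLp X 2 P := (memLp_two_iff_integrable_sq hX.aestronglyMeasurable).2 hX2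
  have hXL1 : Integrable X P := hXL2.integrable one_le_two
  have hfirst_order := forall_integral_le_iff_integral_eq_zero
    (integrable_expectileLoss hτ0 hτ1 hXL2) (integrable_expectileLossDeriv hXL1 τ t)
    (expectileLoss_tangent_le hτ0 hτ1) (expectileLoss_le_tangent_add_sq hτ0 hτ1)
  simp only [expectileLoss, sub_neg, integral_expectileLossDeriv hXL1] at hfirst_order
  rw [hfirst_order]
  constructor <;> intro h <;> linarith
end

section
/- Let (Ω, P) be a probability space, X : Ω → ℝ an integrable random variable that is essentially bounded above with M = essSup X, and τ ∈ (0,1). If P(X < M) > 0, then the τ-expectile of X, i.e., the unique real number t satisfying τ·∫ max(X − t, 0) dP = (1 − τ)·∫ max(t − X, 0) dP, satisfies t < M. -/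
open MeasureTheory

namespace MeasureTheory

variable {Ω : Type*} [MeasurableSpace Ω] {μ : Measure Ω}

theorem integral_max_zero_eq_zero_iff {f : Ω → ℝ} (hf : Integrable f μ) :
    ∫ ω, max (f ω) 0 ∂μ = 0 ↔ ∀ᵐ ω ∂μ, f ω ≤ 0 := by
  rw [integral_eq_zero_iff_of_nonneg_ae (.of_forall fun _ ↦ le_max_right (f _) 0) hf.pos_part]
  simp only [Filter.EventuallyEq, Pi.zero_apply, max_eq_right_iff]

def IsExpectile (μ : Measure Ω) (X : Ω → ℝ) (τ t : ℝ) : Prop :=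
  τ * ∫ ω, max (X ω - t) 0 ∂μ = (1 - τ) * ∫ ω, max (t - X ω) 0 ∂μ

theorem IsExpectile.ae_eq_const_of_ae_le [IsFiniteMeasure μ] {X : Ω → ℝ} {τ t : ℝ}
    (h : IsExpectile μ X τ t) (hX : Integrable X μ) (hτ : τ < 1) (hXt : ∀ᵐ ω ∂μ, X ω ≤ t) :
    X =ᵐ[μ] fun _ ↦ t := by
  have hupper : ∫ ω, max (X ω - t) 0 ∂μ = 0 :=
    (integral_max_zero_eq_zero_iff (hX.sub (integrable_const t))).2
      (hXt.mono fun _ h ↦ sub_nonpos.2 h)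
  have hlower : ∫ ω, max (t - X ω) 0 ∂μ = 0 := by
    unfold IsExpectile at h
    rw [hupper, mul_zero, zero_eq_mul] at h
    exact h.resolve_left (sub_ne_zero.2 hτ.ne')
  have htX : ∀ᵐ ω ∂μ, t - X ω ≤ 0 :=
    (integral_max_zero_eq_zero_iff ((integrable_const t).sub hX)).1 hlower
  filter_upwards [hXt, htX] with ω h₁ h₂
  linarith

end MeasureTheory

theorem expectile_lt_essSup
    {Ω : Type*} [MeasurableSpace Ω] (P : Measure Ω) [IsProbabilityMeasure P]
    (X : Ω → ℝ) (hX : Integrable X P)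
    (hbdd : ∃ C : ℝ, ∀ᵐ ω ∂P, X ω ≤ C)
    (τ : ℝ) (hτ : τ ∈ Set.Ioo (0 : ℝ) 1)
    (hlt : 0 < P {ω | X ω < essSup X P})
    (t : ℝ)
    (ht : τ * ∫ ω, max (X ω - t) 0 ∂P = (1 - τ) * ∫ ω, max (t - X ω) 0 ∂P) :
    t < essSup X P := by
  by_contra! hMt
  have hXM : ∀ᵐ ω ∂P, X ω ≤ essSup X P := ae_le_essSup hbdd
  have hXt : X =ᵐ[P] fun _ ↦ t :=
    IsExpectile.ae_eq_const_of_ae_le ht hX hτ.2 (hXM.mono fun _ h ↦ h.trans hMt)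
  refine hlt.ne' (measure_eq_zero_iff_ae_notMem.2 ?_)
  filter_upwards [hXt] with ω h
  simpa [h] using hMt
end
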